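/- arXiv:1310.0742 — 5 statements merged into one kernel-verified Lean document; each statement's English description precedes it below -/
import Mathlib

section
/- Let S be the monoid presented by generators a_0, a_1, a_2, … (indexed by the natural numbers) subject to the relations a_i a_j = a_{j+1} a_i for all i ≤ j. Then the one-element right S-act Θ_S has no SF-precover; that is, there is no S-map g : P → Θ_S with P strongly flat such that every S-map g' : P' → Θ_S from a strongly flat S-act P' factors as g' = g∘f for some S-map f : P' → P. -/
/-- The defining relations of Kruml's monoid: `aᵢ aⱼ = a_{j+1} aᵢ` for all `i ≤ j`,
as a relation on the free monoid on `ℕ`. -/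
inductive KrumlRel : FreeMonoid ℕ → FreeMonoid ℕ → Prop
  | rel (i j : ℕ) : i ≤ j →
      KrumlRel (FreeMonoid.of i * FreeMonoid.of j) (FreeMonoid.of (j + 1) * FreeMonoid.of i)

/-- Kruml's monoid `S = ⟨a₀, a₁, a₂, … ∣ aᵢaⱼ = a_{j+1}aᵢ for i ≤ j⟩`:
the quotient of the free monoid on `ℕ` by the congruence generated by the relations. -/
abbrev KrumlMonoid : Type := (conGen KrumlRel).Quotient

/-- `act : X → S → X` makes the nonempty set `X` a right `S`-act:
`x·1 = x` and `x·(st) = (x·s)·t`. -/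
def IsRightAct {X : Type} (act : X → KrumlMonoid → X) : Prop :=
  Nonempty X ∧ (∀ x, act x 1 = x) ∧ ∀ x s t, act x (s * t) = act (act x s) t

/-- Condition (P): whenever `x·s = y·t` there exist `z, u, v` with `x = z·u`, `y = z·v`
and `us = vt`. -/
def CondP {X : Type} (act : X → KrumlMonoid → X) : Prop :=
  ∀ x y s t, act x s = act y t →
    ∃ z u v, x = act z u ∧ y = act z v ∧ u * s = v * t

/-- Condition (E): whenever `x·s = x·t` there exist `z, u` with `x = z·u` and `us = ut`. -/
def CondE {X : Type} (act : X → KrumlMonoid → X) : Prop :=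
  ∀ x s t, act x s = act x t → ∃ z u, x = act z u ∧ u * s = u * t

/-- A right `S`-act is strongly flat if it satisfies Conditions (P) and (E). -/
def StronglyFlat {X : Type} (act : X → KrumlMonoid → X) : Prop :=
  CondP act ∧ CondE act

/-!
For a linearly ordered set `I`, glue copies of the free act `S` along the finite subsets of `I`,
the inclusion `T ⊆ U` acting by the element of `S` that inserts the points of `U \ T` at their
ranks. The resulting directed colimit `A_I` of free cyclic acts is strongly flat. For `i < j`
the generators of the stages `{i}` and `{j}` are `z·a₁` and `z·a₀`, with `z` the generator of
`{i, j}`. Since `u a₀ ≠ u a₁` for every `u ∈ S` (in the representation of `S` on `ℕ` by coface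
maps every element acts injectively, while `a₀` and `a₁` differ), an `S`-map from `A_I` into an
act satisfying Condition (E) is injective on these generators. An SF-precover `P → Θ_S` would
thus receive an injection of every `I`, in particular of the power set of `P`, contradicting
Cantor.
-/

namespace KrumlMonoid

def gen (i : ℕ) : KrumlMonoid := (conGen KrumlRel).mk' (FreeMonoid.of i)

theorem gen_mul_gen {i j : ℕ} (h : i ≤ j) : gen i * gen j = gen (j + 1) * gen i := by
  simp only [gen, ← map_mul]
  exact (Con.eq _).2 (ConGen.Rel.of _ _ (KrumlRel.rel i j h))

def coface (i : ℕ) : Function.End ℕ := fun m => if m < i then m else m + 1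

theorem coface_injective (i : ℕ) : Function.Injective (coface i) := by
  intro m n h
  simp only [coface] at h
  split_ifs at h <;> omega

theorem coface_mul_coface {i j : ℕ} (h : i ≤ j) :
    coface i * coface j = coface (j + 1) * coface i := by
  funext m
  change coface i (coface j m) = coface (j + 1) (coface i m)
  simp only [coface]
  split_ifs <;> omega

/-- `S` acts on `ℕ` by coface maps `δᵢ`: its relations are the cosimplicial identities
`δᵢ δⱼ = δⱼ₊₁ δᵢ` for `i ≤ j`. -/
def toEnd : KrumlMonoid →* Function.End ℕ :=
  (conGen KrumlRel).lift (FreeMonoid.lift coface) <| Con.conGen_le.2 fun _ _ h => by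
    obtain ⟨i, j, hij⟩ := h
    simpa using coface_mul_coface hij

theorem toEnd_gen (i : ℕ) : toEnd (gen i) = coface i :=
  (Con.lift_mk' _ _).trans (FreeMonoid.lift_eval_of _ i)

theorem injective_toEnd (u : KrumlMonoid) : Function.Injective (toEnd u) := by
  induction u using Con.induction_on with | H w => ?_
  induction w using FreeMonoid.inductionOn' with
  | one => exact Function.injective_id
  | of_mul i w ih =>
    rw [Con.coe_mul, map_mul]
    exact (coface_injective i).comp ih

theorem mul_gen_zero_ne_mul_gen_one (u : KrumlMonoid) : u * gen 0 ≠ u * gen 1 := by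
  intro h
  have h0 := congrFun (congrArg toEnd h) 0
  rw [map_mul, map_mul, toEnd_gen, toEnd_gen] at h0
  exact absurd (injective_toEnd u h0) (by decide)

/-- A directed system of copies of the free act `S`: stage `i` maps into stage `k ≥ i` by
left multiplication with `map k i`. -/
structure TransitionSystem (ι : Type) [SemilatticeSup ι] where
  map : ι → ι → KrumlMonoid
  map_self : ∀ i, map i i = 1
  map_comp : ∀ {i j k}, i ≤ j → j ≤ k → map k i = map k j * map j i

namespace TransitionSystem

variable {ι : Type} [SemilatticeSup ι] (D : TransitionSystem ι)

def Rel (p q : ι × KrumlMonoid) : Prop :=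
  ∃ k, p.1 ≤ k ∧ q.1 ≤ k ∧ D.map k p.1 * p.2 = D.map k q.1 * q.2

theorem rel_equivalence : Equivalence D.Rel where
  refl p := ⟨p.1, le_rfl, le_rfl, rfl⟩
  symm := fun ⟨k, hp, hq, h⟩ => ⟨k, hq, hp, h.symm⟩
  trans {p q r} := fun ⟨k, hp, hq, h⟩ ⟨l, hq', hr, h'⟩ => by
    refine ⟨k ⊔ l, hp.trans le_sup_left, hr.trans le_sup_right, ?_⟩
    calc D.map (k ⊔ l) p.1 * p.2 = D.map (k ⊔ l) k * (D.map k p.1 * p.2) := by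
          rw [D.map_comp hp le_sup_left, mul_assoc]
      _ = D.map (k ⊔ l) l * (D.map l q.1 * q.2) := by
          rw [h, ← mul_assoc, ← D.map_comp hq le_sup_left, D.map_comp hq' le_sup_right, mul_assoc]
      _ = D.map (k ⊔ l) r.1 * r.2 := by
          rw [h', ← mul_assoc, ← D.map_comp hr le_sup_right]

def setoid : Setoid (ι × KrumlMonoid) := ⟨D.Rel, D.rel_equivalence⟩

def Colimit : Type := Quotient D.setoid

def of (i : ι) (w : KrumlMonoid) : D.Colimit := Quotient.mk D.setoid (i, w)

def act (x : D.Colimit) (s : KrumlMonoid) : D.Colimit :=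
  Quotient.map (sa := D.setoid) (sb := D.setoid) (fun p => (p.1, p.2 * s))
    (by rintro _ _ ⟨k, hp, hq, h⟩; exact ⟨k, hp, hq, by rw [← mul_assoc, h, mul_assoc]⟩) x

theorem act_of (i : ι) (w s : KrumlMonoid) : D.act (D.of i w) s = D.of i (w * s) := rfl

theorem of_eq_of_iff {i j : ι} {v w : KrumlMonoid} :
    D.of i v = D.of j w ↔ ∃ k, i ≤ k ∧ j ≤ k ∧ D.map k i * v = D.map k j * w :=
  Quotient.eq (r := D.setoid)

theorem of_eq_act_of {i k : ι} (h : i ≤ k) (w : KrumlMonoid) :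
    D.of i w = D.act (D.of k 1) (D.map k i * w) := by
  rw [act_of, one_mul, of_eq_of_iff]
  exact ⟨k, h, le_rfl, by rw [D.map_self, one_mul]⟩

theorem isRightAct_act [Nonempty ι] : IsRightAct D.act :=
  ⟨⟨D.of (Classical.arbitrary ι) 1⟩,
    Quotient.ind fun p => congrArg (D.of p.1) (mul_one p.2),
    Quotient.ind fun p s t => congrArg (D.of p.1) (mul_assoc p.2 s t).symm⟩

theorem condP_act : CondP D.act := by
  refine Quotient.ind fun ⟨i, v⟩ => Quotient.ind fun ⟨j, w⟩ s t h => ?_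
  obtain ⟨k, hi, hj, hk⟩ := D.of_eq_of_iff.1 h
  exact ⟨D.of k 1, D.map k i * v, D.map k j * w, D.of_eq_act_of hi v, D.of_eq_act_of hj w,
    by simpa only [mul_assoc] using hk⟩

theorem condE_act : CondE D.act := by
  refine Quotient.ind fun ⟨i, w⟩ s t h => ?_
  obtain ⟨k, hi, -, hk⟩ := D.of_eq_of_iff.1 h
  exact ⟨D.of k 1, D.map k i * w, D.of_eq_act_of hi w, by simpa only [mul_assoc] using hk⟩

theorem stronglyFlat_act : StronglyFlat D.act := ⟨D.condP_act, D.condE_act⟩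

end TransitionSystem

section FinsetSystem

open Finset

variable {I : Type} [LinearOrder I]

def rankIn (T : Finset I) (x : I) : ℕ := #{y ∈ T | y < x}

theorem rankIn_mono (T : Finset I) {x y : I} (h : x < y) : rankIn T x ≤ rankIn T y :=
  card_le_card (monotone_filter_right T fun _ _ (hz : _ < x) => hz.trans h)

/-- Reading `aᵣ` as "insert a new element of rank `r`", the element of `S` realising the
inclusion `T ⊆ U`. -/
noncomputable def transition (U T : Finset I) : KrumlMonoid :=
  if h : (U \ T).Nonempty then
    transition U (insert ((U \ T).max' h) T) * gen (rankIn T ((U \ T).max' h))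
  else 1
termination_by #(U \ T)
decreasing_by
  rw [sdiff_insert]
  exact card_erase_lt_of_mem (max'_mem _ h)

theorem transition_self (T : Finset I) : transition T T = 1 := by
  rw [transition, dif_neg (by simp)]

theorem transition_eq_transition_insert_mul {U T : Finset I} {x : I} (hx : x ∈ U \ T) :
    transition U T = transition U (insert x T) * gen (rankIn T x) := by
  have hne : (U \ T).Nonempty := ⟨x, hx⟩
  set m := (U \ T).max' hne
  have hm : m ∈ U \ T := max'_mem _ hne
  have hT : transition U T = transition U (insert m T) * gen (rankIn T m) := by
    rw [transition, dif_pos hne]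
  have hxm_le : x ≤ m := le_max' _ x hx
  obtain hxm | hxm := hxm_le.eq_or_lt
  · rw [hT, hxm]
  have hxT : x ∉ T := (mem_sdiff.1 hx).2
  have hmT : m ∉ insert x T := by simpa [hxm.ne'] using (mem_sdiff.1 hm).2
  -- `m` is still the largest element to be inserted after `x`
  have hxT' : transition U (insert x T) =
      transition U (insert m (insert x T)) * gen (rankIn (insert x T) m) := by
    have hne' : (U \ insert x T).Nonempty := ⟨m, mem_sdiff.2 ⟨(mem_sdiff.1 hm).1, hmT⟩⟩
    have hmax : (U \ insert x T).max' hne' = m :=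
      le_antisymm (max'_le _ _ _ fun y hy => le_max' _ y (sdiff_subset_sdiff le_rfl
        (subset_insert x T) hy)) (le_max' _ m (mem_sdiff.2 ⟨(mem_sdiff.1 hm).1, hmT⟩))
    rw [transition, dif_pos hne', hmax]
  have hrank_x : rankIn (insert m T) x = rankIn T x := by
    simp [rankIn, filter_insert, hxm.not_gt]
  have hrank_m : rankIn (insert x T) m = rankIn T m + 1 := by
    rw [rankIn, filter_insert, if_pos hxm,
      card_insert_of_notMem fun h => hxT (mem_filter.1 h).1]
    rfl
  have hmx : x ∈ U \ insert m T := by simp [mem_sdiff.1 hx, hxm.ne]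
  rw [hT, transition_eq_transition_insert_mul hmx, hrank_x, insert_comm, mul_assoc,
    gen_mul_gen (rankIn_mono T hxm), ← mul_assoc, ← hrank_m, ← hxT']
termination_by #(U \ T)
decreasing_by
  rw [sdiff_insert]
  exact card_erase_lt_of_mem hm

theorem transition_trans {U V T : Finset I} (hTV : T ⊆ V) (hVU : V ⊆ U) :
    transition U T = transition U V * transition V T := by
  obtain hVT | ⟨x, hx⟩ := (V \ T).eq_empty_or_nonempty
  · rw [(sdiff_eq_empty_iff_subset.1 hVT).antisymm hTV, transition_self, mul_one]
  have hxV : x ∈ V := (mem_sdiff.1 hx).1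
  have hxU : x ∈ U \ T := mem_sdiff.2 ⟨hVU hxV, (mem_sdiff.1 hx).2⟩
  rw [transition_eq_transition_insert_mul hxU, transition_eq_transition_insert_mul hx,
    transition_trans (insert_subset hxV hTV) hVU, mul_assoc]
termination_by #(V \ T)
decreasing_by
  rw [sdiff_insert]
  exact card_erase_lt_of_mem hx

theorem transition_insert {T : Finset I} {x : I} (hx : x ∉ T) :
    transition (insert x T) T = gen (rankIn T x) := by
  rw [transition_eq_transition_insert_mul (mem_sdiff.2 ⟨mem_insert_self x T, hx⟩),
    transition_self, one_mul]

theorem transition_pair_left {i j : I} (h : i < j) : transition {i, j} {i} = gen 1 := by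
  rw [pair_comm, transition_insert (by simpa using h.ne'), rankIn, filter_singleton, if_pos h,
    card_singleton]

theorem transition_pair_right {i j : I} (h : i < j) : transition {i, j} {j} = gen 0 := by
  rw [transition_insert (by simpa using h.ne), rankIn, filter_singleton, if_neg h.not_gt,
    card_empty]

variable (I) in
noncomputable def finsetSystem : TransitionSystem (Finset I) where
  map := transition
  map_self := transition_self
  map_comp := transition_trans

theorem injective_apply_singleton_of_condE {P : Type} {actP : P → KrumlMonoid → P}
    (hE : CondE actP) {f : (finsetSystem I).Colimit → P}
    (hf : ∀ x s, f ((finsetSystem I).act x s) = actP (f x) s) :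
    Function.Injective fun i : I => f ((finsetSystem I).of {i} 1) := by
  have hne_of_lt {i j : I} (hij : i < j) :
      f ((finsetSystem I).of {i} 1) ≠ f ((finsetSystem I).of {j} 1) := by
    intro h
    rw [(finsetSystem I).of_eq_act_of (by simp : ({i} : Finset I) ⊆ {i, j}),
      (finsetSystem I).of_eq_act_of (by simp : ({j} : Finset I) ⊆ {i, j}), hf, hf] at h
    obtain ⟨-, u, -, hu⟩ := hE _ _ _ h
    simp only [finsetSystem, transition_pair_left hij, transition_pair_right hij, mul_one] at hu
    exact mul_gen_zero_ne_mul_gen_one u hu.symm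
  intro i j h
  by_contra hne
  obtain hij | hij := lt_or_gt_of_ne hne
  exacts [hne_of_lt hij h, hne_of_lt hij h.symm]

end FinsetSystem

end KrumlMonoid

/-- The one-element right `S`-act `Θ_S` (here `Unit` with the trivial action `u·s = u`)
has no `SF`-precover: there is no `S`-map `g : P → Θ_S` with `P` a strongly flat right
`S`-act such that every `S`-map `g' : P' → Θ_S` from a strongly flat right `S`-act `P'`
factors as `g' = g ∘ f` for some `S`-map `f : P' → P`. -/
theorem krumlMonoid_no_SF_precover :
    ¬ ∃ (P : Type) (actP : P → KrumlMonoid → P), IsRightAct actP ∧ StronglyFlat actP ∧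
      ∃ g : P → Unit,
        (∀ x s, g (actP x s) = g x) ∧
        ∀ (P' : Type) (actP' : P' → KrumlMonoid → P'),
          IsRightAct actP' → StronglyFlat actP' →
            ∀ g' : P' → Unit, (∀ x s, g' (actP' x s) = g' x) →
              ∃ f : P' → P, (∀ x s, f (actP' x s) = actP (f x) s) ∧ g ∘ f = g' := by
  rintro ⟨P, actP, -, hP, _, -, hprecover⟩
  let D := KrumlMonoid.finsetSystem (LinearExtension (Set P))
  obtain ⟨f, hf, -⟩ := hprecover D.Colimit D.act D.isRightAct_act D.stronglyFlat_act
    (fun _ => ()) (fun _ _ => rfl)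
  exact Function.cantor_injective _
    (KrumlMonoid.injective_apply_singleton_of_condE (I := LinearExtension (Set P)) hP.2 hf)
end

section
/- Let S be the monoid presented by generators a_0, a_1, a_2, … subject to the relations a_i a_j = a_{j+1} a_i for all i ≤ j. Then every element w ∈ S has a unique normal form: there is exactly one finite weakly increasing sequence α(1) ≤ α(2) ≤ … ≤ α(n) of natural numbers (n ≥ 0) such that w = a_{α(1)} a_{α(2)} ⋯ a_{α(n)} (the empty product being the identity). -/
/-- The generator `aᵢ` of Kruml's monoid. -/
def a (i : ℕ) : KrumlMonoid := Con.mk' (conGen KrumlRel) (FreeMonoid.of i)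

/-!
`S` acts on weakly increasing words by left multiplication: `aᵢ · (a_j w')` is `aᵢ a_j w'` if
`i ≤ j`, and otherwise `a_j · (a_{i-1} · w')`, by the relation `a_j a_{i-1} = aᵢ a_j`. These
operations satisfy the defining relations, so they do define an action of `S`. Acting with `w`
on the empty word gives a sorted word whose product is `w`, while acting with the product of a
sorted word `l` on the empty word returns `l`; so the sorted word representing `w` is unique.
-/

namespace Kruml

def leftMul : ℕ → List ℕ → List ℕ
  | i, [] => [i]
  | i, j :: l => if i ≤ j then i :: j :: l else j :: leftMul (i - 1) l

lemma le_of_mem_leftMul {c i : ℕ} {l : List ℕ} (hi : c ≤ i) (hl : ∀ y ∈ l, c ≤ y) :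
    ∀ x ∈ leftMul i l, c ≤ x := by
  induction l generalizing i with
  | nil => simpa [leftMul] using hi
  | cons j t ih =>
    rw [List.forall_mem_cons] at hl
    unfold leftMul
    split_ifs
    · exact List.forall_mem_cons.2 ⟨hi, List.forall_mem_cons.2 hl⟩
    · exact List.forall_mem_cons.2 ⟨hl.1, ih (by omega) hl.2⟩

lemma pairwise_leftMul (i : ℕ) {l : List ℕ} (hl : l.Pairwise (· ≤ ·)) :
    (leftMul i l).Pairwise (· ≤ ·) := by
  induction l generalizing i with
  | nil => simp [leftMul]
  | cons j t ih =>
    rw [List.pairwise_cons] at hl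
    unfold leftMul
    split_ifs with hij
    · exact List.pairwise_cons.2
        ⟨List.forall_mem_cons.2 ⟨hij, fun b hb => hij.trans (hl.1 b hb)⟩, List.pairwise_cons.2 hl⟩
    · exact List.pairwise_cons.2 ⟨le_of_mem_leftMul (by omega) hl.1, ih (i - 1) hl.2⟩

lemma leftMul_of_pairwise_cons {i : ℕ} {l : List ℕ} (h : (i :: l).Pairwise (· ≤ ·)) :
    leftMul i l = i :: l := by
  cases l with
  | nil => rfl
  | cons j t => simp [leftMul, (List.pairwise_cons.1 h).1 j (by simp)]

lemma leftMul_leftMul_of_le {l : List ℕ} (hl : l.Pairwise (· ≤ ·)) {i j : ℕ} (hij : i ≤ j) :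
    leftMul i (leftMul j l) = leftMul (j + 1) (leftMul i l) := by
  induction l generalizing i j with
  | nil => simp [leftMul, hij, show ¬j + 1 ≤ i by omega]
  | cons k t ih =>
    rw [List.pairwise_cons] at hl
    by_cases hjk : j ≤ k
    · simp [leftMul, hjk, hij.trans hjk, hij, show ¬j + 1 ≤ i by omega]
    by_cases hik : i ≤ k
    · simp [leftMul, hjk, hik, show ¬j + 1 ≤ i by omega]
    · simp only [leftMul, hjk, hik, show ¬j + 1 ≤ k by omega, if_false, add_tsub_cancel_right]
      rw [ih hl.2 (show i - 1 ≤ j - 1 by omega), show j - 1 + 1 = j by omega]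

abbrev SortedWord : Type := {l : List ℕ // l.Pairwise (· ≤ ·)}

def freeAction : FreeMonoid ℕ →* Function.End SortedWord :=
  FreeMonoid.lift fun i l => ⟨leftMul i l, pairwise_leftMul i l.2⟩

lemma conGen_le_ker_freeAction : conGen KrumlRel ≤ Con.ker freeAction := by
  refine Con.conGen_le.2 ?_
  rintro _ _ ⟨i, j, hij⟩
  rw [Con.ker_rel]
  funext l
  simp only [map_mul, freeAction, Function.End.mul_def]
  exact Subtype.ext (leftMul_leftMul_of_le l.2 hij)

def action : KrumlMonoid →* Function.End SortedWord :=
  (conGen KrumlRel).lift freeAction conGen_le_ker_freeAction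

lemma action_a_apply (i : ℕ) (l : SortedWord) : (action (a i) l).1 = leftMul i l.1 :=
  rfl

lemma action_mul_apply (v w : KrumlMonoid) (l : SortedWord) :
    action (v * w) l = action v (action w l) := by
  rw [map_mul]
  rfl

lemma a_mul_a_of_le {i j : ℕ} (h : i ≤ j) : a i * a j = a (j + 1) * a i :=
  (Con.eq (conGen KrumlRel)).2 (ConGen.Rel.of _ _ (KrumlRel.rel i j h))

lemma prod_leftMul (i : ℕ) (l : List ℕ) :
    ((leftMul i l).map a).prod = a i * (l.map a).prod := by
  induction l generalizing i with
  | nil => simp [leftMul]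
  | cons j t ih =>
    unfold leftMul
    split_ifs with hij
    · simp
    · have hrel := a_mul_a_of_le (show j ≤ i - 1 by omega)
      rw [Nat.sub_add_cancel (by omega : 1 ≤ i)] at hrel
      simp only [List.map_cons, List.prod_cons, ih, ← mul_assoc, hrel]

lemma prod_action_apply (w : KrumlMonoid) (l : SortedWord) :
    ((action w l).1.map a).prod = w * (l.1.map a).prod := by
  refine Con.induction_on w fun x => ?_
  induction x using FreeMonoid.inductionOn' generalizing l with
  | one => rw [Con.coe_one, map_one, one_mul]; rfl
  | of_mul i x ih =>
    have hx : ((FreeMonoid.of i * x : FreeMonoid ℕ) : KrumlMonoid) = a i * x := Con.coe_mul _ _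
    rw [hx, action_mul_apply, action_a_apply, prod_leftMul, ih, mul_assoc]

lemma action_prod_apply_nil {l : List ℕ} (hl : l.Pairwise (· ≤ ·)) :
    action (l.map a).prod ⟨[], List.Pairwise.nil⟩ = ⟨l, hl⟩ := by
  induction l with
  | nil => rfl
  | cons i t ih =>
    apply Subtype.ext
    rw [List.map_cons, List.prod_cons, action_mul_apply, action_a_apply, ih hl.of_cons]
    exact leftMul_of_pairwise_cons hl

def normalForm (w : KrumlMonoid) : SortedWord := action w ⟨[], List.Pairwise.nil⟩

end Kruml

/-- Every element `w` of `S` has a unique normal form `w = a_{α(1)} ⋯ a_{α(n)}` with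
`α(1) ≤ α(2) ≤ … ≤ α(n)` (the empty product, `n = 0`, being the identity): there is exactly
one weakly increasing finite sequence (list) of natural numbers whose corresponding product
of generators equals `w`. -/
theorem krumlMonoid_unique_normal_form (w : KrumlMonoid) :
    ∃! l : List ℕ, l.Pairwise (· ≤ ·) ∧ (l.map a).prod = w := by
  refine ⟨(Kruml.normalForm w).1, ⟨(Kruml.normalForm w).2, ?_⟩, ?_⟩
  · simpa [Kruml.normalForm] using Kruml.prod_action_apply w ⟨[], List.Pairwise.nil⟩
  · rintro l ⟨hl, rfl⟩
    rw [Kruml.normalForm, Kruml.action_prod_apply_nil hl]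
end

section
/- Let S be a monoid that is right cancellative (for all s, t, u ∈ S, su = tu implies s = t) and satisfies the descending chain condition on principal left ideals (every descending chain Ss_1 ⊇ Ss_2 ⊇ Ss_3 ⊇ … of principal left ideals eventually stabilizes; equivalently, there is no infinite strictly descending chain of principal left ideals). Then S is a group, i.e., every element of S has a two-sided inverse. -/
/-- A right cancellative monoid satisfying the descending chain condition on principal
left ideals (`Ss = {t * s : t ∈ S}`: every descending chain `Ss₁ ⊇ Ss₂ ⊇ …` eventually
stabilizes) is a group: every element has a two-sided inverse. -/
theorem rightCancellative_dcc_is_group (S : Type*) [Monoid S]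
    (hrc : ∀ s t u : S, s * u = t * u → s = t)
    (hdcc : ∀ c : ℕ → S,
      (∀ n, Set.range (fun t => t * c (n + 1)) ⊆ Set.range (fun t => t * c n)) →
        ∃ N, ∀ n, N ≤ n →
          Set.range (fun t => t * c n) = Set.range (fun t => t * c N)) :
    ∀ s : S, ∃ t : S, s * t = 1 ∧ t * s = 1 := by
  intro s
  obtain ⟨N, hN⟩ := hdcc (fun n => s ^ (n + 1)) (by
    rintro n x ⟨t, ht⟩
    refine ⟨t * s, ?_⟩
    show t * s * s ^ (n + 1) = x
    rw [mul_assoc, ← pow_succ']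
    exact ht)
  have h := hN (N + 1) (by omega)
  have hm : s ^ (N + 1) ∈ Set.range (fun t => t * s ^ (N + 1 + 1)) := by
    rw [h]; exact ⟨1, one_mul _⟩
  obtain ⟨t, ht⟩ := hm
  have ht' : t * s ^ (N + 1 + 1) = s ^ (N + 1) := ht
  have hts : t * s = 1 := by
    apply hrc _ _ (s ^ (N + 1))
    rw [one_mul, mul_assoc, ← pow_succ']
    exact ht'
  have hst : s * t = 1 := by
    apply hrc _ _ s
    rw [mul_assoc, hts, mul_one, one_mul]
  exact ⟨t, hst, hts⟩
end

section
/- Let S be the monoid presented by generators x_0, x_1, x_2, … subject to the relations x_0 x_k = x_0 and x_k x_0 = x_0 for all k ≥ 1, x_k^k = x_k^{k+1} for all k ≥ 1, and x_i x_j = x_j^2 for all i, j ≥ 1, and for each i ≥ 0 let σ_i = {(s,t) ∈ S×S : ∃ p, q ∈ R_i with ps = qt} where R_i = {x_i^n : n ≥ 0}. Then the relations σ_i are pairwise distinct: if i ≠ j then σ_i ≠ σ_j. -/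
/-- The defining relations of the Qiao–Wei monoid: `x₀xₖ = xₖx₀ = x₀` for `k ≥ 1`,
`xₖ^k = xₖ^(k+1)` for `k ≥ 1`, and `xᵢxⱼ = xⱼ²` for `i, j ≥ 1`, as a relation on the
free monoid on `ℕ`. -/
inductive QWRel : FreeMonoid ℕ → FreeMonoid ℕ → Prop
  | zero_mul (k : ℕ) : 1 ≤ k →
      QWRel (FreeMonoid.of 0 * FreeMonoid.of k) (FreeMonoid.of 0)
  | mul_zero (k : ℕ) : 1 ≤ k →
      QWRel (FreeMonoid.of k * FreeMonoid.of 0) (FreeMonoid.of 0)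
  | pow (k : ℕ) : 1 ≤ k →
      QWRel (FreeMonoid.of k ^ k) (FreeMonoid.of k ^ (k + 1))
  | mul (i j : ℕ) : 1 ≤ i → 1 ≤ j →
      QWRel (FreeMonoid.of i * FreeMonoid.of j) (FreeMonoid.of j ^ 2)

/-- The Qiao–Wei monoid `S = ⟨x₀,x₁,… ∣ x₀xₖ = xₖx₀ = x₀, xₖ^k = xₖ^(k+1) (k ≥ 1),
xᵢxⱼ = xⱼ² (i,j ≥ 1)⟩`: the quotient of the free monoid on `ℕ` by the congruence
generated by the relations. -/
abbrev QWMonoid : Type := (conGen QWRel).Quotient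

/-- The generator `xᵢ` of the Qiao–Wei monoid. -/
def x (i : ℕ) : QWMonoid := Con.mk' (conGen QWRel) (FreeMonoid.of i)

/-- The relation `σᵢ` on `S`: `(s,t) ∈ σᵢ` iff `ps = qt` for some `p, q` in
`Rᵢ = {xᵢⁿ : n ≥ 0}`. -/
def σ (i : ℕ) : QWMonoid → QWMonoid → Prop := fun s t =>
  ∃ p q : QWMonoid, (∃ m : ℕ, p = x i ^ m) ∧ (∃ n : ℕ, q = x i ^ n) ∧ p * s = q * t

/-!
The pair `(1, xᵢ)` lies in `σᵢ`, since `xᵢ · 1 = 1 · xᵢ`. To see that it is not in `σⱼ` for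
`j ≥ 1`, `j ≠ i`, map `S` onto the four-element monoid `{1, hit, miss, 0}` in which `hit` and
`miss` form a right-zero band and `0` is absorbing, by `x₀ ↦ 0`, `xᵢ ↦ hit` (for `i ≥ 1`) and all
other generators to `miss`. The image of a word records whether it contains `x₀` and otherwise
whether its last letter is `xᵢ`. Powers of `xⱼ` land in `{1, miss}` while `xⱼⁿxᵢ` lands in
`{hit, 0}`. Since one of two distinct indices is positive, this separates `σᵢ` from `σⱼ`.
-/

namespace QWMonoid

variable {M : Type*} [Monoid M]

def lift (f : ℕ → M) (zero_mul : ∀ k, 1 ≤ k → f 0 * f k = f 0)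
    (mul_zero : ∀ k, 1 ≤ k → f k * f 0 = f 0) (pow : ∀ k, 1 ≤ k → f k ^ k = f k ^ (k + 1))
    (mul : ∀ i j, 1 ≤ i → 1 ≤ j → f i * f j = f j ^ 2) : QWMonoid →* M :=
  Con.lift _ (FreeMonoid.lift f) <| Con.conGen_le.2 fun _ _ h => by
    cases h <;> simp_all [Con.ker_rel]

@[simp]
lemma lift_x (f : ℕ → M) (zero_mul mul_zero pow mul) (i : ℕ) :
    lift f zero_mul mul_zero pow mul (x i) = f i := by
  simp [lift, x]

end QWMonoid

inductive LastLetter : Type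
  | one | hit | miss | zero
  deriving DecidableEq

namespace LastLetter

instance : Fintype LastLetter := ⟨{one, hit, miss, zero}, fun u => by cases u <;> decide⟩

def mul : LastLetter → LastLetter → LastLetter
  | one, v => v
  | u, one => u
  | zero, _ => zero
  | _, zero => zero
  | _, v => v

instance : Monoid LastLetter where
  mul := mul
  one := one
  one_mul := by decide
  mul_one := by decide
  mul_assoc := by decide

lemma mul_self (u : LastLetter) : u * u = u := by revert u; decide

lemma pow_succ_eq_self (u : LastLetter) (n : ℕ) : u ^ (n + 1) = u := by
  induction n with
  | zero => exact pow_one u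
  | succ n ih => rw [pow_succ, ih, mul_self]

lemma miss_pow (n : ℕ) : miss ^ n = one ∨ miss ^ n = miss := by
  cases n with
  | zero => exact .inl rfl
  | succ n => exact .inr (pow_succ_eq_self _ _)

def letter (i k : ℕ) : LastLetter := if k = 0 then zero else if k = i then hit else miss

lemma letter_of_pos {i k : ℕ} (hk : 1 ≤ k) : letter i k = hit ∨ letter i k = miss := by
  unfold letter
  split_ifs <;> simp_all

def hom (i : ℕ) : QWMonoid →* LastLetter :=
  QWMonoid.lift (letter i)
    (fun k hk => by rcases letter_of_pos (i := i) hk with h | h <;> rw [h] <;> rfl)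
    (fun k hk => by rcases letter_of_pos (i := i) hk with h | h <;> rw [h] <;> rfl)
    (fun k hk => by obtain ⟨k, rfl⟩ := Nat.exists_eq_add_of_le' hk
                    rw [pow_succ_eq_self, pow_succ_eq_self])
    (fun k l hk hl => by
      rcases letter_of_pos (i := i) hk with h | h <;>
        rcases letter_of_pos (i := i) hl with h' | h' <;> rw [h, h'] <;> rfl)

end LastLetter

lemma sigma_one_x (i : ℕ) : σ i 1 (x i) :=
  ⟨x i ^ 1, x i ^ 0, ⟨1, rfl⟩, ⟨0, rfl⟩, by simp⟩

lemma not_sigma_one_x {i j : ℕ} (hj : 1 ≤ j) (hij : i ≠ j) : ¬ σ j 1 (x i) := by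
  rintro ⟨_, _, ⟨m, rfl⟩, ⟨n, rfl⟩, h⟩
  have hxj : LastLetter.letter i j = .miss := by
    simp [LastLetter.letter, Nat.one_le_iff_ne_zero.1 hj, hij.symm]
  have hxi : LastLetter.letter i i = .hit ∨ LastLetter.letter i i = .zero := by
    unfold LastLetter.letter; split_ifs <;> simp_all
  replace h := congrArg (LastLetter.hom i) h
  simp only [LastLetter.hom, map_mul, map_pow, QWMonoid.lift_x, mul_one, hxj] at h
  rcases LastLetter.miss_pow m with hm | hm <;> rcases LastLetter.miss_pow n with hn | hn <;>
    rcases hxi with hi | hi <;> rw [hm, hn, hi] at h <;> exact absurd h (by decide)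

/-- The relations `σᵢ` are pairwise distinct: `i ≠ j` implies `σᵢ ≠ σⱼ`. -/
theorem qw_sigma_distinct : ∀ i j : ℕ, i ≠ j → σ i ≠ σ j := by
  intro i j hij h
  rcases Nat.eq_zero_or_pos j with rfl | hj
  · exact not_sigma_one_x (Nat.pos_of_ne_zero hij) hij.symm (h ▸ sigma_one_x 0)
  · exact not_sigma_one_x hj hij (h ▸ sigma_one_x i)
end

section
/- Let S be the monoid presented by generators x_0, x_1, x_2, … subject to the relations x_0 x_k = x_0 and x_k x_0 = x_0 for all k ≥ 1, x_k^k = x_k^{k+1} for all k ≥ 1, and x_i x_j = x_j^2 for all i, j ≥ 1, and for each i ≥ 1 let σ_i = {(s,t) ∈ S×S : ∃ p, q ∈ R_i with ps = qt} where R_i = {x_i^n : n ≥ 0}. Then each σ_i (i ≥ 1) is a right congruence on S, and for all i, j ≥ 1 the quotient right S-acts S/σ_i and S/σ_j are isomorphic. -/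
section PowLeftRel

variable {M : Type*} [Monoid M]

def powLeftRel (a : M) (s t : M) : Prop := ∃ m n : ℕ, a ^ m * s = a ^ n * t

theorem powLeftRel_equivalence (a : M) : Equivalence (powLeftRel a) where
  refl s := ⟨0, 0, rfl⟩
  symm := fun ⟨m, n, h⟩ => ⟨n, m, h.symm⟩
  trans := by
    rintro s t u ⟨m, n, hst⟩ ⟨k, l, htu⟩
    refine ⟨k + m, n + l, ?_⟩
    calc a ^ (k + m) * s = a ^ k * (a ^ m * s) := by rw [pow_add, mul_assoc]
      _ = a ^ n * (a ^ k * t) := by rw [hst, ← mul_assoc, ← mul_assoc, ← pow_add, ← pow_add,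
          add_comm]
      _ = a ^ (n + l) * u := by rw [htu, ← mul_assoc, ← pow_add]

theorem powLeftRel.mul_right {a s t : M} (h : powLeftRel a s t) (u : M) :
    powLeftRel a (s * u) (t * u) :=
  let ⟨m, n, h⟩ := h
  ⟨m, n, by rw [← mul_assoc, h, mul_assoc]⟩

theorem pow_add_two_of_pow_three {a : M} (ha : a ^ 3 = a ^ 2) (k : ℕ) : a ^ (k + 2) = a ^ 2 := by
  induction k with
  | zero => rfl
  | succ k ih => rw [add_right_comm, pow_succ, ih, ← pow_succ, ha]

theorem powLeftRel_iff {a s t : M} (ha : a ^ 3 = a ^ 2) :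
    powLeftRel a s t ↔ a ^ 2 * s = a ^ 2 * t := by
  refine ⟨fun ⟨m, n, h⟩ => ?_, fun h => ⟨2, 2, h⟩⟩
  calc a ^ 2 * s = a ^ 2 * (a ^ m * s) := by
        rw [← mul_assoc, ← pow_add, add_comm, pow_add_two_of_pow_three ha m]
    _ = a ^ 2 * t := by rw [h, ← mul_assoc, ← pow_add, add_comm, pow_add_two_of_pow_three ha n]

variable {a b : M}

theorem powLeftRel.mul_left (hba : b * a = a ^ 2) (ha : a ^ 3 = a ^ 2) {s t : M}
    (h : powLeftRel a s t) : powLeftRel b (a * s) (a * t) := by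
  have hb2a : b ^ 2 * a = a ^ 2 :=
    calc b ^ 2 * a = b * (b * a) := by rw [sq, mul_assoc]
      _ = b * a * a := by rw [mul_assoc, ← sq, hba]
      _ = a ^ 2 := by rw [hba, ← pow_succ, ha]
  refine ⟨2, 2, ?_⟩
  rw [← mul_assoc, ← mul_assoc, hb2a, (powLeftRel_iff ha).1 h]

theorem powLeftRel_mul_mul_left (hba : b * a = a ^ 2) (s : M) : powLeftRel a (b * (a * s)) s :=
  ⟨0, 2, by rw [pow_zero, one_mul, ← mul_assoc, hba]⟩

def powLeftRelQuotEquiv (hba : b * a = a ^ 2) (hab : a * b = b ^ 2)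
    (ha : a ^ 3 = a ^ 2) (hb : b ^ 3 = b ^ 2) : Quot (powLeftRel a) ≃ Quot (powLeftRel b) where
  toFun := Quot.map (a * ·) fun _ _ => powLeftRel.mul_left hba ha
  invFun := Quot.map (b * ·) fun _ _ => powLeftRel.mul_left hab hb
  left_inv := Quot.ind fun s => Quot.sound (powLeftRel_mul_mul_left hba s)
  right_inv := Quot.ind fun t => Quot.sound (powLeftRel_mul_mul_left hab t)

end PowLeftRel

theorem x_mul_x {i j : ℕ} (hi : 1 ≤ i) (hj : 1 ≤ j) : x i * x j = x j ^ 2 :=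
  (Con.eq _).2 (ConGen.Rel.of _ _ (QWRel.mul i j hi hj))

theorem x_one_sq : x 1 ^ 2 = x 1 :=
  ((Con.eq _).2 (ConGen.Rel.of _ _ (QWRel.pow 1 le_rfl))).symm

theorem x_pow_three {k : ℕ} (hk : 1 ≤ k) : x k ^ 3 = x k ^ 2 :=
  calc x k ^ 3 = x k * (x 1 * x k) := by rw [x_mul_x le_rfl hk, pow_succ']
    _ = x 1 * x k := by rw [← mul_assoc, x_mul_x hk le_rfl, x_one_sq]
    _ = x k ^ 2 := x_mul_x le_rfl hk

theorem σ_eq_powLeftRel (i : ℕ) : σ i = powLeftRel (x i) := by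
  ext s t
  constructor
  · rintro ⟨_, _, ⟨m, rfl⟩, ⟨n, rfl⟩, h⟩
    exact ⟨m, n, h⟩
  · rintro ⟨m, n, h⟩
    exact ⟨_, _, ⟨m, rfl⟩, ⟨n, rfl⟩, h⟩

/-- For `i ≥ 1`, each `σᵢ` is a right congruence on `S` (an equivalence relation
compatible with right multiplication), and for all `i, j ≥ 1` the quotient right
`S`-acts `S/σᵢ` and `S/σⱼ` (with action `[s]·u = [su]`) are isomorphic: there is a
bijection `f : S/σᵢ → S/σⱼ` commuting with the actions. -/
theorem qw_quotients_isomorphic :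
    (∀ i : ℕ, 1 ≤ i →
      Equivalence (σ i) ∧ ∀ s t u : QWMonoid, σ i s t → σ i (s * u) (t * u)) ∧
    ∀ i j : ℕ, 1 ≤ i → 1 ≤ j →
      ∃ (acti : Quot (σ i) → QWMonoid → Quot (σ i))
        (actj : Quot (σ j) → QWMonoid → Quot (σ j)),
        (∀ s u : QWMonoid, acti (Quot.mk (σ i) s) u = Quot.mk (σ i) (s * u)) ∧
        (∀ s u : QWMonoid, actj (Quot.mk (σ j) s) u = Quot.mk (σ j) (s * u)) ∧
        ∃ f : Quot (σ i) → Quot (σ j), Function.Bijective f ∧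
          ∀ (q : Quot (σ i)) (u : QWMonoid), f (acti q u) = actj (f q) u := by
  refine ⟨fun i _ => σ_eq_powLeftRel i ▸ ⟨powLeftRel_equivalence _, fun s t u h => h.mul_right u⟩,
    fun i j hi hj => ?_⟩
  rw [σ_eq_powLeftRel i, σ_eq_powLeftRel j]
  let e := powLeftRelQuotEquiv (x_mul_x hj hi) (x_mul_x hi hj) (x_pow_three hi) (x_pow_three hj)
  refine ⟨fun q u => Quot.map (· * u) (fun _ _ h => h.mul_right u) q,
    fun q u => Quot.map (· * u) (fun _ _ h => h.mul_right u) q,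
    fun _ _ => rfl, fun _ _ => rfl, e, e.bijective, ?_⟩
  rintro ⟨s⟩ u
  exact congrArg (Quot.mk _) (mul_assoc _ _ _).symm
end
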